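/- Let X and Y be Tychonoff (completely regular Hausdorff) spaces, E and F nontrivial real normed vector spaces, and T : C*(X,E) → C*(Y,F) a biseparating map. Let y ∈ Y and let x ∈ StoneCech X be a support point of y. If f ∈ C*(X,E) and there exists an open neighborhood U of x in StoneCech X such that f vanishes identically on ι_X⁻¹(U), then there exists an open neighborhood V of y in Y such that Tf vanishes identically on V. -/

import Mathlib

open scoped BoundedContinuousFunction

/-- `x ∈ StoneCech X` is a support point of `y ∈ Y` (relative to a map
`T : C*(X,E) → C*(Y,F)`) if for every open neighborhood `U` of `x` in `StoneCech X` there is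
`f ∈ C*(X,E)` with cozero set contained in `ι_X⁻¹(U)` and `(Tf)(y) ≠ 0`. -/
def IsSupportPoint {X Y E F : Type*} [TopologicalSpace X] [TopologicalSpace Y]
    [NormedAddCommGroup E] [NormedAddCommGroup F]
    (T : (X →ᵇ E) → (Y →ᵇ F)) (y : Y) (x : StoneCech X) : Prop :=
  ∀ U : Set (StoneCech X), IsOpen U → x ∈ U →
    ∃ f : X →ᵇ E, {x' : X | f x' ≠ 0} ⊆ stoneCechUnit ⁻¹' U ∧ T f y ≠ 0

lemma norm_mul_norm_eq_zero_of_cozero_subset {X E : Type*} [NormedAddCommGroup E]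
    {f g : X → E} {s : Set X} (hf : ∀ x ∈ s, f x = 0) (hg : {x | g x ≠ 0} ⊆ s) (x : X) :
    ‖f x‖ * ‖g x‖ = 0 := by
  by_cases hgx : g x = 0
  · simp [hgx]
  · simp [hf x (hg hgx)]

lemma eq_zero_of_norm_mul_norm_eq_zero {E : Type*} [NormedAddCommGroup E] {a b : E}
    (h : ‖a‖ * ‖b‖ = 0) (hb : b ≠ 0) : a = 0 := by
  simpa [hb] using h

theorem stmt_12_general {X Y E F : Type*}
    [TopologicalSpace X] [TopologicalSpace Y]
    [NormedAddCommGroup E]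
    [NormedAddCommGroup F]
    (T : (X →ᵇ E) → (Y →ᵇ F))
    (hsep : ∀ f g : X →ᵇ E, (∀ x, ‖f x‖ * ‖g x‖ = 0) → ∀ y, ‖T f y‖ * ‖T g y‖ = 0)
    (y : Y) (x : StoneCech X) (hx : IsSupportPoint T y x)
    (f : X →ᵇ E)
    (hf : ∃ U : Set (StoneCech X), IsOpen U ∧ x ∈ U ∧ ∀ x' ∈ stoneCechUnit ⁻¹' U, f x' = 0) :
    ∃ V : Set Y, IsOpen V ∧ y ∈ V ∧ ∀ y' ∈ V, T f y' = 0 := by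
  obtain ⟨U, hU, hxU, hfU⟩ := hf
  obtain ⟨g, hgU, hgy⟩ := hx U hU hxU
  have hTfg := hsep f g (norm_mul_norm_eq_zero_of_cozero_subset hfU hgU)
  exact ⟨{y' | T g y' ≠ 0}, isOpen_ne.preimage (T g).continuous, hgy,
    fun y' hy' => eq_zero_of_norm_mul_norm_eq_zero (hTfg y') hy'⟩

/-- For a biseparating `T : C*(X,E) → C*(Y,F)`, `y ∈ Y` and a support point
`x` of `y`: if `f` vanishes on `ι_X⁻¹(U)` for some open neighborhood `U` of `x`, then
`Tf` vanishes on a neighborhood of `y`. -/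
theorem stmt_12 {X Y E F : Type*}
    [TopologicalSpace X] [T35Space X] [TopologicalSpace Y] [T35Space Y]
    [NormedAddCommGroup E] [NormedSpace ℝ E] [Nontrivial E]
    [NormedAddCommGroup F] [NormedSpace ℝ F] [Nontrivial F]
    (T : (X →ᵇ E) → (Y →ᵇ F))
    (hbij : Function.Bijective T)
    (hadd : ∀ f g : X →ᵇ E, T (f + g) = T f + T g)
    (hsep : ∀ f g : X →ᵇ E, (∀ x, ‖f x‖ * ‖g x‖ = 0) → ∀ y, ‖T f y‖ * ‖T g y‖ = 0)
    (hsep' : ∀ f g : X →ᵇ E, (∀ y, ‖T f y‖ * ‖T g y‖ = 0) → ∀ x, ‖f x‖ * ‖g x‖ = 0)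
    (y : Y) (x : StoneCech X) (hx : IsSupportPoint T y x)
    (f : X →ᵇ E)
    (hf : ∃ U : Set (StoneCech X), IsOpen U ∧ x ∈ U ∧ ∀ x' ∈ stoneCechUnit ⁻¹' U, f x' = 0) :
    ∃ V : Set Y, IsOpen V ∧ y ∈ V ∧ ∀ y' ∈ V, T f y' = 0 :=
  stmt_12_general T hsep y x hx f hf
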